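/- arXiv:2506.07420 — 4 statements merged into one kernel-verified Lean document; each statement's English description precedes it below -/
import Mathlib

section
/- Let p = 2, let A be a torsion-free ℤ_2-algebra, and let (M_n)_{n≥0} be an A-valued 2-adic moment sequence. Then for all integers m ≥ 0 and i ≥ 1, the difference M_{m+2^i} − M_m lies in 2^{i+2}·A. -/
open scoped TensorProduct

/-- An `A`-valued `p`-adic moment sequence: for every polynomial `f(r) = ∑ aₙ rⁿ` with
rational coefficients taking `ℤ_p`-integral values on `ℤ_p^×`, the element
`∑ aₙ · Mₙ` of `A ⊗ ℚ` lies in the image of the natural map `A → A ⊗ ℚ`. -/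
def IsPadicMomentSeq (p : ℕ) [Fact p.Prime] {A : Type*} [CommRing A] (M : ℕ → A) : Prop :=
  ∀ f : Polynomial ℚ,
    (∀ x : ℤ_[p]ˣ, ‖Polynomial.aeval ((x : ℤ_[p]) : ℚ_[p]) f‖ ≤ 1) →
    ∃ y : A, (∑ n ∈ f.support, (M n) ⊗ₜ[ℤ] (f.coeff n)) = y ⊗ₜ[ℤ] (1 : ℚ)

/-! A unit `x` of `ℤ_2` satisfies `x² ≡ 1 mod 8`, and each further squaring gains a factor 2
because `x^{2^i} + 1` is even; so `x^{2^i} ≡ 1 mod 2^{i+2}`. Hence the test polynomial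
`2^{-(i+2)} (r^{m+2^i} - r^m)` is integral on `ℤ_2^×`, the moment condition puts
`2^{-(i+2)} (M_{m+2^i} - M_m)` in the image of `A`, and torsion-freeness turns this into
divisibility by `2^{i+2}` in `A`. -/

open Polynomial

theorem two_pow_add_two_dvd_pow_two_pow_sub_one {R : Type*} [CommRing R] {x : R}
    (h : (2 : R) ^ 3 ∣ x ^ 2 - 1) {i : ℕ} (hi : 1 ≤ i) :
    (2 : R) ^ (i + 2) ∣ x ^ 2 ^ i - 1 := by
  induction i, hi using Nat.le_induction with
  | base => simpa using h
  | succ i hi ih =>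
    have h_plus : (2 : R) ∣ x ^ 2 ^ i + 1 := by
      have : x ^ 2 ^ i + 1 = (x ^ 2 ^ i - 1) + 2 := by ring
      rw [this]
      exact dvd_add ((dvd_pow_self 2 (by omega)).trans ih) dvd_rfl
    have h_factor : x ^ 2 ^ (i + 1) - 1 = (x ^ 2 ^ i - 1) * (x ^ 2 ^ i + 1) := by
      rw [pow_succ, pow_mul]; ring
    rw [h_factor, pow_succ]
    exact mul_dvd_mul ih h_plus

theorem PadicInt.two_pow_three_dvd_sq_sub_one {x : ℤ_[2]} (hx : IsUnit x) :
    (2 : ℤ_[2]) ^ 3 ∣ x ^ 2 - 1 := by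
  have h_sq : ∀ u : ZMod (2 ^ 3), IsUnit u → u ^ 2 = 1 := by decide
  have h_ker : x ^ 2 - 1 ∈ RingHom.ker (toZModPow 3 : ℤ_[2] →+* ZMod (2 ^ 3)) := by
    rw [RingHom.mem_ker, map_sub, map_pow, h_sq _ (hx.map _), map_one, sub_self]
  rw [ker_toZModPow, Ideal.mem_span_singleton] at h_ker
  exact_mod_cast h_ker

theorem sum_support_tmul_coeff_of_support_subset {A : Type*} [AddCommGroup A] (M : ℕ → A)
    {f : ℚ[X]} {s : Finset ℕ} (hs : f.support ⊆ s) :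
    ∑ n ∈ f.support, M n ⊗ₜ[ℤ] f.coeff n = ∑ n ∈ s, M n ⊗ₜ[ℤ] f.coeff n :=
  Finset.sum_subset hs fun n _ hn => by rw [notMem_support_iff.mp hn, TensorProduct.tmul_zero]

theorem eq_zsmul_of_tmul_inv_eq_tmul_one {A : Type*} [AddCommGroup A]
    (htf : Function.Injective fun a : A => a ⊗ₜ[ℤ] (1 : ℚ)) {a y : A} {q : ℤ} (hq : q ≠ 0)
    (h : a ⊗ₜ[ℤ] ((q : ℚ)⁻¹) = y ⊗ₜ[ℤ] (1 : ℚ)) : a = q • y := by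
  apply htf
  calc a ⊗ₜ[ℤ] (1 : ℚ) = a ⊗ₜ[ℤ] (q • (q : ℚ)⁻¹) := by
        rw [zsmul_eq_mul, mul_inv_cancel₀ (Int.cast_ne_zero.mpr hq)]
    _ = q • (y ⊗ₜ[ℤ] (1 : ℚ)) := by rw [TensorProduct.tmul_smul, h]
    _ = (q • y) ⊗ₜ[ℤ] (1 : ℚ) := TensorProduct.smul_tmul' _ _ _

theorem PadicInt.norm_aeval_inv_pow_mul_X_pow_sub_le_one {p : ℕ} [Fact p.Prime] {k d : ℕ}
    {x : ℤ_[p]} (hx : (p : ℤ_[p]) ^ k ∣ x ^ d - 1) (m : ℕ) :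
    ‖aeval (x : ℚ_[p]) (C ((p : ℚ) ^ k)⁻¹ * (X ^ (m + d) - X ^ m))‖ ≤ 1 := by
  obtain ⟨w, hw⟩ := hx
  have hp : (p : ℚ_[p]) ≠ 0 := mod_cast (Fact.out : p.Prime).ne_zero
  have h_eval : aeval (x : ℚ_[p]) (C ((p : ℚ) ^ k)⁻¹ * (X ^ (m + d) - X ^ m)) =
      ((x ^ m * w : ℤ_[p]) : ℚ_[p]) := by
    have hw' : (x : ℚ_[p]) ^ d - 1 = (p : ℚ_[p]) ^ k * w := by
      simpa using congrArg ((↑) : ℤ_[p] → ℚ_[p]) hw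
    simp only [map_mul, map_sub, map_pow, aeval_C, aeval_X, map_inv₀, map_natCast, pow_add]
    push_cast
    rw [← mul_sub_one, hw']
    field_simp
  rw [h_eval, ← norm_def]
  exact norm_le_one _

theorem IsPadicMomentSeq.sub_mem_span_pow {p : ℕ} [Fact p.Prime] {A : Type*} [CommRing A]
    (htf : Function.Injective fun a : A => a ⊗ₜ[ℤ] (1 : ℚ)) {M : ℕ → A}
    (hM : IsPadicMomentSeq p M) {k d : ℕ}
    (h : ∀ x : ℤ_[p]ˣ, (p : ℤ_[p]) ^ k ∣ (x : ℤ_[p]) ^ d - 1) (hd : d ≠ 0) (m : ℕ) :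
    M (m + d) - M m ∈ Ideal.span {(p : A) ^ k} := by
  set f : ℚ[X] := C ((p : ℚ) ^ k)⁻¹ * (X ^ (m + d) - X ^ m)
  obtain ⟨y, hy⟩ := hM f fun x => PadicInt.norm_aeval_inv_pow_mul_X_pow_sub_le_one (h x) m
  have hmd : m + d ≠ m := by omega
  have h_supp : f.support ⊆ {m + d, m} := by
    intro n hn
    contrapose! hn
    simp_all [f, coeff_X_pow]
  have h_coeff : f.coeff (m + d) = ((p ^ k : ℤ) : ℚ)⁻¹ ∧ f.coeff m = -((p ^ k : ℤ) : ℚ)⁻¹ := by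
    simp [f, coeff_X_pow, hd]
  rw [sum_support_tmul_coeff_of_support_subset M h_supp, Finset.sum_pair hmd, h_coeff.1,
    h_coeff.2, TensorProduct.tmul_neg, ← sub_eq_add_neg, ← TensorProduct.sub_tmul] at hy
  have hpk : (p ^ k : ℤ) ≠ 0 := pow_ne_zero _ (mod_cast (Fact.out : p.Prime).ne_zero)
  rw [eq_zsmul_of_tmul_inv_eq_tmul_one htf hpk hy, Ideal.mem_span_singleton, zsmul_eq_mul]
  exact ⟨y, by push_cast; rfl⟩

theorem momentSeq_kummer_two_general (A : Type*) [CommRing A]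
    (htf : Function.Injective fun a : A => a ⊗ₜ[ℤ] (1 : ℚ))
    (M : ℕ → A) (hM : IsPadicMomentSeq 2 M) (m i : ℕ) (hi : 1 ≤ i) :
    M (m + 2 ^ i) - M m ∈ Ideal.span {(2 : A) ^ (i + 2)} := by
  have h_units : ∀ x : ℤ_[2]ˣ, ((2 : ℕ) : ℤ_[2]) ^ (i + 2) ∣ (x : ℤ_[2]) ^ 2 ^ i - 1 := fun x =>
    mod_cast two_pow_add_two_dvd_pow_two_pow_sub_one
      (PadicInt.two_pow_three_dvd_sq_sub_one x.isUnit) hi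
  exact_mod_cast hM.sub_mem_span_pow htf h_units (pow_ne_zero i two_ne_zero) m

/-- for `p = 2`, a torsion-free `ℤ_2`-algebra `A` and an `A`-valued
`2`-adic moment sequence `(Mₙ)`, for all `m ≥ 0` and `i ≥ 1` one has
`M_{m+2ⁱ} − M_m ∈ 2^{i+2}·A`. -/
theorem momentSeq_kummer_two (A : Type*) [CommRing A] [Algebra ℤ_[2] A]
    (htf : Function.Injective fun a : A => a ⊗ₜ[ℤ] (1 : ℚ))
    (M : ℕ → A) (hM : IsPadicMomentSeq 2 M) (m i : ℕ) (hi : 1 ≤ i) :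
    M (m + 2 ^ i) - M m ∈ Ideal.span {(2 : A) ^ (i + 2)} :=
  momentSeq_kummer_two_general A htf M hM m i hi
end

section
/- For every prime p, every unit c ∈ ℤ_p^×, and every integer n ≥ 1, the element (1 − c^n)·(1 − p^{n−1})·B_n/n of ℚ_p lies in ℤ_p. -/
/-!
Multiplication by `c⁻¹` permutes the residues modulo `p ^ M`, so every `a < p ^ M` can be written
`a = c σ(a) + p ^ M e_a` with `σ` a permutation. Expanding `aⁿ` to second order in `p ^ M` and
summing gives `(1 - cⁿ) ∑_{a < p ^ M} aⁿ = n p ^ M E + p ^ {2M} Z` with `E, Z ∈ ℤ_p`. Faulhaber's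
formula reads `∑_{a < p ^ M} aⁿ = Bₙ p ^ M + p ^ {2M} P(p ^ M)` for a fixed `P ∈ ℚ[X]`, which is
bounded on `ℤ_p`. Dividing by `n p ^ M` shows that `(1 - cⁿ) Bₙ / n` lies within `O(p ^ {-M})`
of `ℤ_p` for every `M`, hence in `ℤ_p`; the factor `1 - p ^ {n - 1}` is an integer.
-/

open Finset
open scoped Polynomial
open Polynomial (C X eval eval_mul eval_C eval_pow eval_X eval_finsetSum eval_eq_sum_range)

theorem exists_one_sub_pow_mul_sum_pow_eq {R ι : Type*} [CommRing R] [Fintype ι]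
    (σ : Equiv.Perm ι) (f : ι → R) (c q : R) (hf : ∀ i, q ∣ f i - c * f (σ i)) (n : ℕ) :
    ∃ E Z : R, (1 - c ^ n) * ∑ i, f i ^ n = n * q * E + q ^ 2 * Z := by
  choose e he using hf
  have hpow : ∀ i, ∃ z, f i ^ n = c ^ n * f (σ i) ^ n +
      n * q * ((c * f (σ i)) ^ (n - 1) * e i) + q ^ 2 * (e i ^ 2 * z) := by
    intro i
    obtain ⟨z, hz⟩ := sq_dvd_add_pow_sub_sub (q * e i) (c * f (σ i)) n
    refine ⟨z, ?_⟩
    rw [show f i = c * f (σ i) + q * e i by linear_combination he i]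
    linear_combination hz
  choose z hz using hpow
  refine ⟨∑ i, (c * f (σ i)) ^ (n - 1) * e i, ∑ i, e i ^ 2 * z i, ?_⟩
  have hperm : ∑ i, f (σ i) ^ n = ∑ i, f i ^ n := Equiv.sum_comp σ (f · ^ n)
  have hsum := congrArg (fun g : ι → R => ∑ i, g i) (funext hz)
  simp only [sum_add_distrib, ← mul_sum, hperm] at hsum
  linear_combination hsum

theorem ZMod.sum_val_eq_sum_range {M : Type*} [AddCommMonoid M] (m : ℕ) [NeZero m]
    (g : ℕ → M) : ∑ x : ZMod m, g x.val = ∑ a ∈ range m, g a :=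
  sum_nbij' ZMod.val (fun a => (a : ZMod m)) (by simp [ZMod.val_lt]) (by simp)
    (by simp) (fun a ha => by simp [ZMod.val_cast_of_lt (mem_range.1 ha)]) (by simp)

theorem exists_sum_range_pow_eq (n : ℕ) : ∃ P : ℚ[X], ∀ m : ℕ,
    ∑ a ∈ range m, (a : ℚ) ^ n = bernoulli n * m + m ^ 2 * P.eval (m : ℚ) := by
  refine ⟨∑ i ∈ range n, C (bernoulli i * (n + 1).choose i / (n + 1)) * X ^ (n - 1 - i),
    fun m => ?_⟩
  rw [sum_range_pow, sum_range_succ, Nat.choose_succ_self_right, Nat.add_sub_cancel_left,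
    eval_finsetSum, mul_sum, add_comm]
  congr 1
  · push_cast
    field_simp
  · refine Finset.sum_congr rfl fun i hi => ?_
    rw [show n + 1 - i = n - 1 - i + 2 by have := mem_range.1 hi; omega]
    simp only [eval_mul, eval_C, eval_pow, eval_X]
    ring

namespace Padic

variable {p : ℕ} [Fact p.Prime]

theorem norm_le_one_of_forall_exists_norm_sub_le {x : ℚ_[p]} {C : ℝ}
    (h : ∀ M : ℕ, ∃ y : ℤ_[p], ‖x - y‖ ≤ C * ‖(p : ℚ_[p])‖ ^ M) : ‖x‖ ≤ 1 := by
  have hsmall : Filter.Tendsto (fun M : ℕ => C * ‖(p : ℚ_[p])‖ ^ M) Filter.atTop (nhds 0) := by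
    simpa using (tendsto_pow_atTop_nhds_zero_of_lt_one (norm_nonneg _)
      (norm_p_lt_one (p := p))).const_mul C
  obtain ⟨M, hM⟩ := (hsmall.eventually (eventually_le_nhds zero_lt_one)).exists
  obtain ⟨y, hy⟩ := h M
  calc ‖x‖ = ‖(y : ℚ_[p]) + (x - y)‖ := by rw [add_sub_cancel]
    _ ≤ max ‖(y : ℚ_[p])‖ ‖x - y‖ := nonarchimedean _ _
    _ ≤ 1 := max_le y.2 (hy.trans hM)

theorem norm_eval_le_sum_norm_coeff (P : ℚ[X]) {x : ℚ} (hx : ‖(x : ℚ_[p])‖ ≤ 1) :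
    ‖((P.eval x : ℚ) : ℚ_[p])‖ ≤ ∑ i ∈ range (P.natDegree + 1), ‖((P.coeff i : ℚ) : ℚ_[p])‖ := by
  rw [eval_eq_sum_range, Rat.cast_sum]
  refine (norm_sum_le _ _).trans (sum_le_sum fun i _ => ?_)
  rw [Rat.cast_mul, Rat.cast_pow, norm_mul, norm_pow]
  exact mul_le_of_le_one_right (norm_nonneg _) (pow_le_one₀ (norm_nonneg _) hx)

end Padic

namespace PadicInt

variable {p : ℕ} [Fact p.Prime]

theorem exists_one_sub_pow_mul_sum_range_pow_eq (c : ℤ_[p]ˣ) (n M : ℕ) :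
    ∃ E Z : ℤ_[p], (1 - (c : ℤ_[p]) ^ n) * ∑ a ∈ range (p ^ M), (a : ℤ_[p]) ^ n =
      n * (p : ℤ_[p]) ^ M * E + ((p : ℤ_[p]) ^ M) ^ 2 * Z := by
  have : NeZero (p ^ M) := ⟨pow_ne_zero _ (Fact.out : p.Prime).ne_zero⟩
  set u : (ZMod (p ^ M))ˣ := Units.map (toZModPow M : ℤ_[p] →+* ZMod (p ^ M)).toMonoidHom c
  rw [← ZMod.sum_val_eq_sum_range]
  refine exists_one_sub_pow_mul_sum_pow_eq (Units.mulLeft u⁻¹) (fun x => (x.val : ℤ_[p])) _ _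
    (fun x => ?_) n
  rw [← Ideal.mem_span_singleton, ← ker_toZModPow, RingHom.mem_ker]
  have hu : toZModPow M (c : ℤ_[p]) = u := rfl
  rw [map_sub, map_mul, map_natCast, map_natCast, ZMod.natCast_zmod_val, ZMod.natCast_zmod_val,
    Units.mulLeft_apply, hu, ← mul_assoc, Units.mul_inv, one_mul, sub_self]

theorem exists_forall_norm_one_sub_pow_mul_bernoulli_div_sub_le (c : ℤ_[p]ˣ) {n : ℕ}
    (hn : 0 < n) : ∃ C : ℝ, ∀ M : ℕ, ∃ y : ℤ_[p],
      ‖((1 - (c : ℤ_[p]) ^ n : ℤ_[p]) : ℚ_[p]) * ((bernoulli n / n : ℚ) : ℚ_[p]) - y‖ ≤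
        C * ‖(p : ℚ_[p])‖ ^ M := by
  obtain ⟨P, hP⟩ := exists_sum_range_pow_eq n
  set K := ∑ i ∈ range (P.natDegree + 1), ‖((P.coeff i : ℚ) : ℚ_[p])‖
  refine ⟨(1 + K) / ‖(n : ℚ_[p])‖, fun M => ?_⟩
  obtain ⟨E, Z, hEZ⟩ := exists_one_sub_pow_mul_sum_range_pow_eq c n M
  have hsum := congrArg ((↑) : ℤ_[p] → ℚ_[p]) hEZ
  have hfaul := congrArg ((↑) : ℚ → ℚ_[p]) (hP (p ^ M))
  have hγ : ‖((1 - (c : ℤ_[p]) ^ n : ℤ_[p]) : ℚ_[p])‖ ≤ 1 := (1 - (c : ℤ_[p]) ^ n).2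
  push_cast [coe_sum] at hsum hfaul hγ ⊢
  rw [hfaul] at hsum
  refine ⟨E, ?_⟩
  have hn0 : (n : ℚ_[p]) ≠ 0 := by exact_mod_cast hn.ne'
  have hq0 : (p : ℚ_[p]) ^ M ≠ 0 := pow_ne_zero _ (by exact_mod_cast (Fact.out : p.Prime).ne_zero)
  have hT : ‖((P.eval ((p : ℚ) ^ M) : ℚ) : ℚ_[p])‖ ≤ K :=
    Padic.norm_eval_le_sum_norm_coeff P (by exact_mod_cast Padic.norm_int_le_one (p ^ M : ℤ))
  generalize ((P.eval ((p : ℚ) ^ M) : ℚ) : ℚ_[p]) = T at hsum hT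
  generalize (1 : ℚ_[p]) - (c : ℚ_[p]) ^ n = γ at hsum hγ ⊢
  have hdiff : γ * ((bernoulli n : ℚ_[p]) / n) - E = (p : ℚ_[p]) ^ M * (Z - γ * T) / n := by
    generalize (p : ℚ_[p]) ^ M = q at hsum hq0 ⊢
    have hcancel : γ * bernoulli n + q * (γ * T) = n * E + q * Z :=
      mul_left_cancel₀ hq0 (by linear_combination hsum)
    field_simp
    linear_combination hcancel
  have hZγT : ‖(Z : ℚ_[p]) - γ * T‖ ≤ 1 + K := by
    refine (norm_sub_le _ _).trans (add_le_add Z.2 ?_)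
    rw [norm_mul]
    exact (mul_le_of_le_one_left (norm_nonneg _) hγ).trans hT
  rw [hdiff, norm_div, norm_mul, norm_pow, div_mul_eq_mul_div, mul_comm (1 + K)]
  gcongr

theorem norm_one_sub_pow_mul_bernoulli_div_le_one (c : ℤ_[p]ˣ) (n : ℕ) :
    ‖((1 - (c : ℤ_[p]) ^ n : ℤ_[p]) : ℚ_[p]) * ((bernoulli n / n : ℚ) : ℚ_[p])‖ ≤ 1 := by
  rcases n.eq_zero_or_pos with rfl | hn
  · simp -- `B₀ / 0 = 0`
  obtain ⟨C, hC⟩ := exists_forall_norm_one_sub_pow_mul_bernoulli_div_sub_le c hn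
  exact Padic.norm_le_one_of_forall_exists_norm_sub_le hC

end PadicInt

theorem regularized_bernoulli_integral_general (p : ℕ) [Fact p.Prime] (c : ℤ_[p]ˣ) (n : ℕ) :
    ‖((1 - (c : ℤ_[p]) ^ n : ℤ_[p]) : ℚ_[p]) *
        ((((1 - (p : ℚ) ^ (n - 1)) * (bernoulli n / (n : ℚ))) : ℚ) : ℚ_[p])‖ ≤ 1 := by
  rw [Rat.cast_mul, mul_left_comm, norm_mul]
  refine mul_le_one₀ ?_ (norm_nonneg _) (PadicInt.norm_one_sub_pow_mul_bernoulli_div_le_one c n)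
  exact_mod_cast Padic.norm_int_le_one (p := p) (1 - (p : ℤ) ^ (n - 1))

/-- for every prime `p`, every unit `c ∈ ℤ_p^×` and every `n ≥ 1`, the
element `(1 − cⁿ)·(1 − p^{n−1})·Bₙ/n` of `ℚ_p` lies in `ℤ_p`. -/
theorem regularized_bernoulli_integral (p : ℕ) [Fact p.Prime] (c : ℤ_[p]ˣ) (n : ℕ)
    (hn : 1 ≤ n) :
    ‖((1 - (c : ℤ_[p]) ^ n : ℤ_[p]) : ℚ_[p]) *
        ((((1 - (p : ℚ) ^ (n - 1)) * (bernoulli n / (n : ℚ))) : ℚ) : ℚ_[p])‖ ≤ 1 :=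
  regularized_bernoulli_integral_general p c n
end

section
/- In ℚ⟦X⟧ one has the identity (1 − exp(−X))·( ∑_{k≥0} S^k/k! ) = X, where S := ∑_{n≥1} (−B_n/n)·X^n/n!. Equivalently, the logarithm of X/(1 − e^{−X}) has exponential generating coefficients −B_n/n, i.e. the nepers of the Todd orientation are N_n^{Td} = −B_n/n. -/
/-!
Write `E = exp S` and `e = exp (-X)`. Termwise differentiation gives `X S' = 1 - X/(eˣ - 1)`,
`E' = S' E` and `e' = -e`, and `X/(eˣ - 1) · (1 - e) = X e`. Hence `F = (1 - e) E` satisfies the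
Euler equation `X F' = F`, which forces `F = c X` with `c` the coefficient of `X` in `F`, namely `1`.
-/

noncomputable section

/-- `S = ∑_{n≥1} (−Bₙ/n)·Xⁿ/n! ∈ ℚ⟦X⟧`, the generating series of the Todd nepers
`N_n^{Td} = −Bₙ/n`. -/
def toddNeperSeries : PowerSeries ℚ :=
  PowerSeries.mk fun n =>
    if n = 0 then 0 else (-(bernoulli n) / (n : ℚ)) * (1 / (n.factorial : ℚ))

/-- The formal exponential `∑_{k≥0} S^k/k!` of `S` (well defined since `S` has zero
constant term: only `k ≤ n` contribute to the coefficient of `Xⁿ`). -/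
def expToddNeperSeries : PowerSeries ℚ :=
  PowerSeries.mk fun n =>
    ∑ k ∈ Finset.range (n + 1),
      (1 / (k.factorial : ℚ)) * PowerSeries.coeff (R := ℚ) n (toddNeperSeries ^ k)

open Finset

namespace PowerSeries

section CommRing

variable {R : Type*} [CommRing R]

theorem coeff_subst_eq_sum_range {f g : R⟦X⟧} (hg : constantCoeff g = 0) (n : ℕ) :
    coeff n (f.subst g) = ∑ d ∈ range (n + 1), coeff d f * coeff n (g ^ d) := by
  rw [coeff_subst' (HasSubst.of_constantCoeff_zero' hg)]
  refine finsum_eq_sum_of_support_subset _ fun d hd => ?_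
  by_contra hdn
  have hlt : n < d := by simpa using hdn
  have hpow : X ^ d ∣ g ^ d := pow_dvd_pow_of_dvd (X_dvd_iff.mpr hg) d
  exact hd (by simp [X_pow_dvd_iff.mp hpow n hlt])

theorem coeff_X_mul_derivative (f : R⟦X⟧) (n : ℕ) :
    coeff n (X * d⁄dX R f) = n * coeff n f := by
  cases n with
  | zero => simp
  | succ n => rw [coeff_succ_X_mul, coeff_derivative, mul_comm, Nat.cast_succ]

theorem eq_C_mul_X_of_X_mul_derivative_eq_self [IsAddTorsionFree R] {f : R⟦X⟧}
    (h : X * d⁄dX R f = f) : f = C (coeff 1 f) * X := by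
  ext n
  have hn := congrArg (coeff n) h
  rw [coeff_X_mul_derivative] at hn
  rw [coeff_C_mul, coeff_X]
  match n with
  | 0 => simpa using hn.symm
  | 1 => simp
  | n + 2 =>
    have : (n + 1) • coeff (n + 2) f = 0 := by
      rw [nsmul_eq_mul]; push_cast at hn ⊢; linear_combination hn
    rw [if_neg (by omega), mul_zero]
    exact (nsmul_eq_zero_iff_right n.succ_ne_zero).mp this

theorem derivative_rescale (a : R) (f : R⟦X⟧) :
    d⁄dX R (rescale a f) = C a * rescale a (d⁄dX R f) := by
  ext n
  simp only [coeff_derivative, coeff_rescale, coeff_C_mul, pow_succ]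
  ring

end CommRing

variable {A : Type*} [CommRing A] [Algebra ℚ A]

theorem derivative_exp_subst {g : A⟦X⟧} (hg : constantCoeff g = 0) :
    d⁄dX A ((exp A).subst g) = (exp A).subst g * d⁄dX A g := by
  rw [derivative_subst (HasSubst.of_constantCoeff_zero' hg), derivative_exp]

theorem derivative_evalNegHom_exp : d⁄dX A (evalNegHom (exp A)) = -evalNegHom (exp A) := by
  simp [evalNegHom, derivative_rescale, derivative_exp]

theorem bernoulliPowerSeries_mul_one_sub_evalNegHom_exp :
    bernoulliPowerSeries A * (1 - evalNegHom (exp A)) = X * evalNegHom (exp A) := by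
  rw [← bernoulliPowerSeries_mul_exp_sub_one, mul_assoc, sub_mul, one_mul,
    exp_mul_exp_neg_eq_one]

end PowerSeries

open PowerSeries

theorem constantCoeff_toddNeperSeries : constantCoeff toddNeperSeries = 0 := by
  simp [← coeff_zero_eq_constantCoeff_apply, toddNeperSeries]

theorem expToddNeperSeries_eq_exp_subst :
    expToddNeperSeries = (exp ℚ).subst toddNeperSeries := by
  ext n
  simp [expToddNeperSeries, coeff_subst_eq_sum_range constantCoeff_toddNeperSeries]

theorem X_mul_derivative_toddNeperSeries :
    X * d⁄dX ℚ toddNeperSeries = 1 - bernoulliPowerSeries ℚ := by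
  ext n
  rw [coeff_X_mul_derivative]
  rcases n with _ | n
  · simp [bernoulliPowerSeries]
  · simp only [toddNeperSeries, bernoulliPowerSeries, coeff_mk, map_sub, coeff_one,
      n.succ_ne_zero, if_false, Algebra.algebraMap_self, RingHom.id_apply]
    field_simp
    ring

theorem mk_neg_one_pow_div_factorial :
    (mk fun k => (-1 : ℚ) ^ k / (k.factorial : ℚ)) = evalNegHom (exp ℚ) := by
  ext n
  simp [evalNegHom, coeff_rescale, div_eq_mul_inv]

/-- in `ℚ⟦X⟧` one has `(1 − exp(−X))·exp(S) = X` where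
`S = ∑_{n≥1} (−Bₙ/n)·Xⁿ/n!`; i.e. `log (X/(1 − e^{−X}))` has exponential generating
coefficients `−Bₙ/n`, the nepers of the Todd orientation. -/
theorem todd_neper_identity :
    (1 - PowerSeries.mk fun k => ((-1 : ℚ) ^ k / (k.factorial : ℚ))) *
        expToddNeperSeries = PowerSeries.X := by
  rw [mk_neg_one_pow_div_factorial, expToddNeperSeries_eq_exp_subst]
  set e := evalNegHom (exp ℚ)
  set E : ℚ⟦X⟧ := (exp ℚ).subst toddNeperSeries
  have hE : d⁄dX ℚ E = E * d⁄dX ℚ toddNeperSeries :=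
    derivative_exp_subst constantCoeff_toddNeperSeries
  have euler : X * d⁄dX ℚ ((1 - e) * E) = (1 - e) * E := by
    calc X * d⁄dX ℚ ((1 - e) * E)
        = (1 - e) * E * (X * d⁄dX ℚ toddNeperSeries) + X * e * E := by
          rw [Derivation.leibniz, hE, map_sub, derivative_one, derivative_evalNegHom_exp]
          simp only [smul_eq_mul]
          ring
      _ = (1 - e) * E := by
          rw [X_mul_derivative_toddNeperSeries, ← bernoulliPowerSeries_mul_one_sub_evalNegHom_exp]
          ring
  rw [eq_C_mul_X_of_X_mul_derivative_eq_self euler]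
  simp [coeff_mul, Nat.sum_antidiagonal_succ, e, E, evalNegHom,
    coeff_subst_eq_sum_range constantCoeff_toddNeperSeries]

end
end

section
/- Let p be an odd prime and let c ∈ ℤ_p^× with c ≠ 1 and c ≠ −1. For j ≥ 0 set a_j := (1 − c^{(p−1)p^j})·(1 − p^{(p−1)p^j − 1})·(−B_{(p−1)p^j}/((p−1)p^j)) ∈ ℚ_p. Then each a_j lies in ℤ_p, for all j' ≥ j ≥ 0 one has a_{j'} − a_j ∈ p^{j+1}·ℤ_p, and consequently the sequence (a_j)_{j≥0} converges in ℤ_p. -/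
/-!
Twice the Mazur measure, `2E_{1,c}(a + pⁿℤ_p) = 2({a/pⁿ} - c{c⁻¹a/pⁿ}) + c - 1`, is `p`-integral
for every `p`. Expanding `a^e` around the representative of `c⁻¹a` modulo `pⁿ` shows that
`(e + 1)pⁿ` times the Riemann sum `∑_{a<pⁿ} a^e · 2E_{1,c}(a + pⁿℤ_p)` is congruent modulo `p²ⁿ`
to `2(1 - c^{e+1})S_{e+1} + pⁿ(c - 1)(1 + e c^e)S_e`, where `S_k = ∑_{a<pⁿ} a^k`. Since
`S_k / pⁿ → B_k`, the Riemann sums tend to `2(1 - c^{e+1})B_{e+1}/(e + 1)`, which is therefore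
integral; and two such limits are congruent modulo `p^{j+1}` as soon as `a^e ≡ a^{e'}` modulo
`p^{j+1}` for every `a`. For `e + 1 = (p-1)pʲ` and `e' + 1 = (p-1)p^{j'}` this holds by Euler's
theorem when `p ∤ a`, and trivially when `p ∣ a` because `e, e' ≥ j + 1`. Finally `2a_j` is
`-(1 - p^e)` times the limit for `e + 1 = (p-1)pʲ`, and for odd `p` neither the factor `2` nor
`1 - p^e ≡ 1 mod p^{j+1}` affects integrality or the congruences.
-/

/-- `a_j = (1 − c^{(p−1)pʲ})·(1 − p^{(p−1)pʲ−1})·(−B_{(p−1)pʲ}/((p−1)pʲ)) ∈ ℚ_p`, the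
moment of the Mazur measure in position `(p−1)pʲ`. -/
noncomputable def mazurMoment (p : ℕ) [Fact p.Prime] (c : ℤ_[p]ˣ) (j : ℕ) : ℚ_[p] :=
  ((1 - (c : ℤ_[p]) ^ ((p - 1) * p ^ j) : ℤ_[p]) : ℚ_[p]) *
    ((((1 - (p : ℚ) ^ ((p - 1) * p ^ j - 1)) *
        (-(bernoulli ((p - 1) * p ^ j)) / (((p - 1) * p ^ j : ℕ) : ℚ))) : ℚ) : ℚ_[p])

open Finset Filter Topology

theorem sq_dvd_mul_add_pow_sub {R : Type*} [CommRing R] (x y : R) (e : ℕ) :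
    y ^ 2 ∣ x * (x + y) ^ e - (x ^ (e + 1) + e * x ^ e * y) := by
  rcases e with _ | e
  · simp
  · obtain ⟨g, hg⟩ := sq_dvd_add_pow_sub_sub y x (e + 1)
    exact ⟨x * g, by push_cast at hg ⊢; linear_combination x * hg⟩

/-- The summand-wise form of `MazurMeasure.sq_dvd_riemannSum`, with `x = a`, `s` the
representative of `c⁻¹a` modulo `N = pⁿ`, and `2cq + c - 1` the weight of `a + pⁿℤ_p`. -/
theorem sq_dvd_mazur_summand {R : Type*} [CommRing R] {c s q N x : R}
    (hx : x = c * (s + N * q)) (e : ℕ) :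
    N ^ 2 ∣ (e + 1) * N * x ^ e * (2 * c * q + c - 1) - 2 * x ^ (e + 1)
      + 2 * c ^ (e + 1) * s ^ (e + 1) - N * (c - 1) * x ^ e - N * (c - 1) * e * c ^ e * s ^ e := by
  obtain ⟨g₁, hg₁⟩ :=
    (mul_pow N q 2 ▸ dvd_mul_right _ _).trans (sq_dvd_mul_add_pow_sub s (N * q) e)
  obtain ⟨g₂, hg₂⟩ := (Dvd.intro q (add_sub_cancel_left s (N * q)).symm).trans
    (sub_dvd_pow_sub_pow (s + N * q) s e)
  refine ⟨-2 * c ^ (e + 1) * g₁ + e * c ^ e * g₂ * (2 * c * q + c - 1), ?_⟩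
  subst hx
  simp only [mul_pow]
  linear_combination (-2 * c ^ (e + 1)) * hg₁ + e * c ^ e * N * (2 * c * q + c - 1) * hg₂

theorem Nat.pow_totient_mul_add_modEq {p k r : ℕ} (hp : p.Prime) (hkr : k ≤ r) (a t : ℕ) :
    a ^ (Nat.totient (p ^ k) * t + r) ≡ a ^ r [MOD p ^ k] := by
  by_cases ha : p ∣ a
  · have hdvd {s : ℕ} (hs : r ≤ s) : p ^ k ∣ a ^ s :=
      (pow_dvd_pow_of_dvd ha k).trans (pow_dvd_pow a (hkr.trans hs))
    exact (Nat.modEq_zero_iff_dvd.mpr (hdvd (Nat.le_add_left _ _))).trans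
      (Nat.modEq_zero_iff_dvd.mpr (hdvd le_rfl)).symm
  · have hcop : a.Coprime (p ^ k) := ((hp.coprime_iff_not_dvd.mpr ha).pow_left k).symm
    rw [pow_add, pow_mul]
    simpa using ((Nat.ModEq.pow_totient hcop).pow t).mul_right (a ^ r)

theorem Nat.succ_le_sub_one_mul_pow_sub_one {p : ℕ} (hp3 : 3 ≤ p) (j : ℕ) :
    j + 1 ≤ (p - 1) * p ^ j - 1 := by
  have h1 : j < p ^ j := Nat.lt_pow_self (by omega)
  have h2 : 2 * p ^ j ≤ (p - 1) * p ^ j := Nat.mul_le_mul_right _ (by omega)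
  omega

theorem Nat.pow_sub_one_mul_pow_sub_one_modEq {p j j' : ℕ} (hp : p.Prime) (hp3 : 3 ≤ p)
    (hjj' : j ≤ j') (a : ℕ) :
    a ^ ((p - 1) * p ^ j' - 1) ≡ a ^ ((p - 1) * p ^ j - 1) [MOD p ^ (j + 1)] := by
  obtain ⟨i, rfl⟩ := Nat.exists_eq_add_of_le hjj'
  have hexp : (p - 1) * p ^ (j + i) - 1 =
      Nat.totient (p ^ (j + 1)) * (p ^ i - 1) + ((p - 1) * p ^ j - 1) := by
    obtain ⟨y, hy⟩ : ∃ y, p ^ i = y + 1 :=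
      ⟨p ^ i - 1, (Nat.sub_add_cancel (Nat.one_le_pow _ _ hp.pos)).symm⟩
    rw [Nat.totient_prime_pow_succ hp, pow_add, ← mul_assoc, hy, Nat.add_sub_cancel,
      mul_comm (p ^ j), mul_add, mul_one]
    have : 1 ≤ (p - 1) * p ^ j := Nat.mul_pos (by omega) (by positivity)
    omega
  rw [hexp]
  exact Nat.pow_totient_mul_add_modEq hp (Nat.succ_le_sub_one_mul_pow_sub_one hp3 j) a _

namespace PadicInt

variable {p : ℕ} [Fact p.Prime]

theorem appr_eq_of_pow_dvd_sub {x : ℤ_[p]} {n b : ℕ} (hb : b < p ^ n)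
    (h : (p : ℤ_[p]) ^ n ∣ x - b) : x.appr n = b := by
  have hcongr :=
    zmod_congr_of_sub_mem_span n x _ _ (appr_spec n x) (Ideal.mem_span_singleton.mpr h)
  simpa [ZMod.natCast_eq_natCast_iff', Nat.mod_eq_of_lt (appr_lt x n), Nat.mod_eq_of_lt hb]
    using hcongr

noncomputable def mulAppr (u : ℤ_[p]) (n a : ℕ) : ℕ := (u * a).appr n

theorem pow_dvd_mul_sub_mulAppr (u : ℤ_[p]) (n a : ℕ) :
    (p : ℤ_[p]) ^ n ∣ u * a - mulAppr u n a :=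
  Ideal.mem_span_singleton.mp (appr_spec n _)

noncomputable def mulApprQuot (u : ℤ_[p]) (n a : ℕ) : ℤ_[p] :=
  (pow_dvd_mul_sub_mulAppr u n a).choose

theorem mul_natCast_eq (u : ℤ_[p]) (n a : ℕ) :
    u * a = mulAppr u n a + p ^ n * mulApprQuot u n a := by
  rw [mulApprQuot, ← (pow_dvd_mul_sub_mulAppr u n a).choose_spec, add_sub_cancel]

theorem mulAppr_mulAppr {u v : ℤ_[p]} (huv : u * v = 1) {n a : ℕ} (ha : a < p ^ n) :
    mulAppr u n (mulAppr v n a) = a := by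
  refine appr_eq_of_pow_dvd_sub ha ⟨-u * mulApprQuot v n a, ?_⟩
  linear_combination -u * mul_natCast_eq v n a + (a : ℤ_[p]) * huv

theorem sum_range_mulAppr {M : Type*} [AddCommMonoid M] (u : ℤ_[p]ˣ) (n : ℕ) (f : ℕ → M) :
    ∑ a ∈ range (p ^ n), f (mulAppr (u : ℤ_[p]) n a) = ∑ a ∈ range (p ^ n), f a := by
  refine sum_nbij' (mulAppr (u : ℤ_[p]) n) (mulAppr (↑u⁻¹ : ℤ_[p]) n)
    (fun a _ => mem_range.mpr (appr_lt _ _)) (fun a _ => mem_range.mpr (appr_lt _ _))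
    (fun a ha => ?_) (fun a ha => ?_) fun _ _ => rfl
  · exact mulAppr_mulAppr u.inv_mul (mem_range.mp ha)
  · exact mulAppr_mulAppr u.mul_inv (mem_range.mp ha)

end PadicInt

namespace Padic

variable {p : ℕ} [Fact p.Prime]

theorem natCast_pow_ne_zero (n : ℕ) : (p : ℚ_[p]) ^ n ≠ 0 :=
  pow_ne_zero n (Nat.cast_ne_zero.mpr (Fact.out : p.Prime).ne_zero)

theorem norm_two_eq_one (hp : p ≠ 2) : ‖(2 : ℚ_[p])‖ = 1 := by
  simpa using norm_natCast_eq_one_iff.mpr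
    ((Nat.coprime_primes Fact.out Nat.prime_two).mpr hp)

theorem norm_pow_mul_le {k l : ℕ} (hkl : k ≤ l) {x : ℚ_[p]} (hx : ‖x‖ ≤ 1) :
    ‖(p : ℚ_[p]) ^ l * x‖ ≤ ‖(p : ℚ_[p]) ^ k‖ := by
  rw [norm_mul, norm_pow, norm_pow]
  exact (mul_le_of_le_one_right (by positivity) hx).trans
    (pow_le_pow_of_le_one (norm_nonneg _) norm_p_lt_one.le hkl)

theorem exists_eq_pow_mul_of_norm_le {x : ℚ_[p]} {k : ℕ} (hx : ‖x‖ ≤ ‖(p : ℚ_[p]) ^ k‖) :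
    ∃ y : ℤ_[p], x = p ^ k * y := by
  refine ⟨⟨x / p ^ k, ?_⟩, (mul_div_cancel₀ x (natCast_pow_ne_zero k)).symm⟩
  rwa [norm_div, div_le_one (norm_pos_iff.mpr (natCast_pow_ne_zero k))]

theorem tendsto_pow_mul_of_norm_le_one {x : ℕ → ℚ_[p]} (hx : ∀ n, ‖x n‖ ≤ 1) :
    Tendsto (fun n => (p : ℚ_[p]) ^ n * x n) atTop (𝓝 0) := by
  refine squeeze_zero_norm (fun n => ?_)
    (tendsto_pow_atTop_nhds_zero_of_lt_one (norm_nonneg _) (norm_p_lt_one (p := p)))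
  rw [norm_mul, norm_pow]
  exact mul_le_of_le_one_right (by positivity) (hx n)

theorem tendsto_pow_nhdsNE_zero : Tendsto (fun n : ℕ => (p : ℚ_[p]) ^ n) atTop (𝓝[≠] 0) :=
  tendsto_nhdsWithin_iff.mpr ⟨tendsto_pow_atTop_nhds_zero_of_norm_lt_one norm_p_lt_one,
    .of_forall natCast_pow_ne_zero⟩

/-- `(e + 1) ∑_{a < N} a^e = B_{e+1}(N) - B_{e+1}(0)`, so this quotient is a difference
quotient of the Bernoulli polynomial `B_{e+1}` at `0`, whose derivative there is `(e + 1) B_e`. -/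
theorem tendsto_sum_range_pow_div (e : ℕ) :
    Tendsto (fun n : ℕ => (∑ a ∈ range (p ^ n), (a : ℚ_[p]) ^ e) / (p : ℚ_[p]) ^ n) atTop
      (𝓝 (bernoulli e : ℚ_[p])) := by
  set P := (Polynomial.bernoulli (e + 1)).map (Rat.castHom ℚ_[p]) with hP
  have hsum (N : ℕ) :
      (e + 1 : ℚ_[p]) * ∑ a ∈ range N, (a : ℚ_[p]) ^ e = P.eval (N : ℚ_[p]) - P.eval 0 := by
    have := congrArg (Rat.castHom ℚ_[p]) (Polynomial.sum_range_pow_eq_bernoulli_sub N e)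
    simp only [map_mul, map_sum, map_sub, map_pow, map_natCast, map_add, map_one] at this
    rw [this, hP, Polynomial.eval_natCast_map, ← Polynomial.coeff_zero_eq_eval_zero,
      Polynomial.coeff_map, Polynomial.coeff_zero_eq_eval_zero, Polynomial.bernoulli_eval_zero]
  have hderiv : HasDerivAt (fun x => P.eval x) ((e + 1 : ℚ_[p]) * bernoulli e) 0 := by
    refine (P.hasDerivAt 0).congr_deriv ?_
    rw [hP, Polynomial.derivative_map, Polynomial.derivative_bernoulli_add_one,
      Polynomial.eval_map, Polynomial.eval₂_at_zero]
    simp [Polynomial.coeff_zero_eq_eval_zero, Polynomial.bernoulli_eval_zero]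
  have hslope := (hasDerivAt_iff_tendsto_slope.mp hderiv).comp tendsto_pow_nhdsNE_zero
  have he : (e + 1 : ℚ_[p]) ≠ 0 := by exact_mod_cast e.succ_ne_zero
  convert hslope.const_mul (e + 1 : ℚ_[p])⁻¹ using 2 with n
  · rw [Function.comp_apply, slope_def_field, sub_zero, ← Nat.cast_pow, ← hsum]
    field_simp
  · field_simp

end Padic

namespace MazurMeasure

open PadicInt

variable {p : ℕ} [Fact p.Prime]

/-- `2E_{1,c}(a + pⁿℤ_p)` for `a < pⁿ`: writing `c⁻¹a = s + pⁿq` with `s < pⁿ`,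
`2({a/pⁿ} - c{c⁻¹a/pⁿ}) + c - 1 = 2(a - cs)/pⁿ + c - 1 = 2cq + c - 1`. -/
noncomputable def weight (c : ℤ_[p]ˣ) (n a : ℕ) : ℤ_[p] :=
  2 * c * mulApprQuot (↑c⁻¹ : ℤ_[p]) n a + c - 1

noncomputable def riemannSum (c : ℤ_[p]ˣ) (e n : ℕ) : ℤ_[p] :=
  ∑ a ∈ range (p ^ n), (a : ℤ_[p]) ^ e * weight c n a

noncomputable def riemannSumLimit (c : ℤ_[p]ˣ) (e : ℕ) : ℚ_[p] :=
  2 * (1 - ((c : ℤ_[p]) : ℚ_[p]) ^ (e + 1)) * bernoulli (e + 1) / ((e + 1 : ℕ) : ℚ_[p])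

theorem sq_dvd_riemannSum (c : ℤ_[p]ˣ) (e n : ℕ) :
    ((p : ℤ_[p]) ^ n) ^ 2 ∣ (e + 1) * p ^ n * riemannSum c e n
      - 2 * (1 - c ^ (e + 1)) * ∑ a ∈ range (p ^ n), (a : ℤ_[p]) ^ (e + 1)
      - p ^ n * (c - 1) * (1 + e * c ^ e) * ∑ a ∈ range (p ^ n), (a : ℤ_[p]) ^ e := by
  have hreindex (k : ℕ) : ∑ a ∈ range (p ^ n), ((mulAppr (↑c⁻¹ : ℤ_[p]) n a : ℕ) : ℤ_[p]) ^ k =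
      ∑ a ∈ range (p ^ n), (a : ℤ_[p]) ^ k :=
    sum_range_mulAppr c⁻¹ n fun b => (b : ℤ_[p]) ^ k
  have hsum : (e + 1) * p ^ n * riemannSum c e n
      - 2 * (1 - c ^ (e + 1)) * ∑ a ∈ range (p ^ n), (a : ℤ_[p]) ^ (e + 1)
      - p ^ n * (c - 1) * (1 + e * c ^ e) * ∑ a ∈ range (p ^ n), (a : ℤ_[p]) ^ e =
      ∑ a ∈ range (p ^ n), ((e + 1) * p ^ n * (a : ℤ_[p]) ^ e * weight c n a
        - 2 * (a : ℤ_[p]) ^ (e + 1)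
        + 2 * c ^ (e + 1) * (mulAppr (↑c⁻¹ : ℤ_[p]) n a : ℤ_[p]) ^ (e + 1)
        - p ^ n * (c - 1) * (a : ℤ_[p]) ^ e
        - p ^ n * (c - 1) * e * c ^ e * (mulAppr (↑c⁻¹ : ℤ_[p]) n a : ℤ_[p]) ^ e) := by
    simp only [sum_sub_distrib, sum_add_distrib, mul_assoc, ← mul_sum, riemannSum, hreindex]
    ring
  rw [hsum]
  refine dvd_sum fun a _ => sq_dvd_mazur_summand ?_ e
  rw [← mul_natCast_eq, ← mul_assoc, Units.mul_inv, one_mul]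

theorem tendsto_riemannSum (c : ℤ_[p]ˣ) (e : ℕ) :
    Tendsto (fun n => (riemannSum c e n : ℚ_[p])) atTop (𝓝 (riemannSumLimit c e)) := by
  set γ : ℚ_[p] := ((c : ℤ_[p]) : ℚ_[p])
  choose E hE using sq_dvd_riemannSum c e
  have hsplit (n : ℕ) : (e + 1 : ℚ_[p]) * riemannSum c e n =
      2 * (1 - γ ^ (e + 1)) * ((∑ a ∈ range (p ^ n), (a : ℚ_[p]) ^ (e + 1)) / (p : ℚ_[p]) ^ n)
      + (γ - 1) * (1 + e * γ ^ e) *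
        ((p : ℚ_[p]) ^ n * ((∑ a ∈ range (p ^ n), (a : ℚ_[p]) ^ e) / (p : ℚ_[p]) ^ n))
      + (p : ℚ_[p]) ^ n * (E n : ℚ_[p]) := by
    have h := congrArg ((↑) : ℤ_[p] → ℚ_[p]) (hE n)
    push_cast [PadicInt.coe_sum, show ((2 : ℤ_[p]) : ℚ_[p]) = 2 from rfl] at h
    have hS := mul_div_cancel₀ (∑ a ∈ range (p ^ n), (a : ℚ_[p]) ^ (e + 1))
      (Padic.natCast_pow_ne_zero n)
    rw [mul_div_cancel₀ _ (Padic.natCast_pow_ne_zero n)]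
    refine mul_left_cancel₀ (Padic.natCast_pow_ne_zero n) ?_
    linear_combination h - 2 * (1 - γ ^ (e + 1)) * hS
  have hlim := ((((Padic.tendsto_sum_range_pow_div (e + 1)).const_mul
    (2 * (1 - γ ^ (e + 1)))).add
    (((tendsto_pow_atTop_nhds_zero_of_norm_lt_one Padic.norm_p_lt_one).mul
      (Padic.tendsto_sum_range_pow_div e)).const_mul ((γ - 1) * (1 + e * γ ^ e)))).add
    (Padic.tendsto_pow_mul_of_norm_le_one fun n => (E n).norm_le_one)).const_mul
      (e + 1 : ℚ_[p])⁻¹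
  have he : (e + 1 : ℚ_[p]) ≠ 0 := by exact_mod_cast e.succ_ne_zero
  convert hlim using 2 with n
  · rw [← hsplit, inv_mul_cancel_left₀ he]
  · rw [riemannSumLimit]
    push_cast
    ring

theorem norm_riemannSumLimit_le (c : ℤ_[p]ˣ) (e : ℕ) : ‖riemannSumLimit c e‖ ≤ 1 :=
  le_of_tendsto' (tendsto_riemannSum c e).norm fun n => (riemannSum c e n).norm_le_one

theorem pow_dvd_riemannSum_sub (c : ℤ_[p]ˣ) {e e' k : ℕ}
    (h : ∀ a : ℕ, a ^ e' ≡ a ^ e [MOD p ^ k]) (n : ℕ) :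
    (p : ℤ_[p]) ^ k ∣ riemannSum c e' n - riemannSum c e n := by
  rw [riemannSum, riemannSum, ← sum_sub_distrib]
  refine dvd_sum fun a _ => ?_
  rw [← sub_mul]
  refine Dvd.dvd.mul_right ?_ _
  simpa using (Int.castRingHom ℤ_[p]).map_dvd (h a).symm.dvd

theorem norm_riemannSumLimit_sub_le (c : ℤ_[p]ˣ) {e e' k : ℕ}
    (h : ∀ a : ℕ, a ^ e' ≡ a ^ e [MOD p ^ k]) :
    ‖riemannSumLimit c e' - riemannSumLimit c e‖ ≤ ‖(p : ℚ_[p]) ^ k‖ := by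
  refine le_of_tendsto' ((tendsto_riemannSum c e').sub (tendsto_riemannSum c e)).norm
    fun n => ?_
  obtain ⟨y, hy⟩ := pow_dvd_riemannSum_sub c h n
  rw [← PadicInt.coe_sub, hy, PadicInt.coe_mul, PadicInt.coe_pow, PadicInt.coe_natCast]
  exact Padic.norm_pow_mul_le le_rfl y.norm_le_one

theorem two_mul_mazurMoment (c : ℤ_[p]ˣ) (j : ℕ) :
    2 * mazurMoment p c j = -(1 - (p : ℚ_[p]) ^ ((p - 1) * p ^ j - 1)) *
      riemannSumLimit c ((p - 1) * p ^ j - 1) := by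
  have hp2 := (Fact.out : p.Prime).two_le
  have hn : (p - 1) * p ^ j - 1 + 1 = (p - 1) * p ^ j :=
    Nat.sub_add_cancel (Nat.mul_pos (by omega) (by positivity))
  rw [riemannSumLimit, hn, mazurMoment]
  push_cast
  ring

theorem norm_mazurMoment_le (hp : p ≠ 2) (c : ℤ_[p]ˣ) (j : ℕ) : ‖mazurMoment p c j‖ ≤ 1 := by
  have h := congrArg norm (two_mul_mazurMoment c j)
  rw [norm_mul, Padic.norm_two_eq_one hp, one_mul] at h
  rw [h, norm_mul, norm_neg]
  refine mul_le_one₀ ?_ (norm_nonneg _) (norm_riemannSumLimit_le c _)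
  simpa using Padic.norm_int_le_one (p := p) (1 - (p : ℤ) ^ ((p - 1) * p ^ j - 1))

theorem norm_mazurMoment_sub_le (hp : p ≠ 2) (c : ℤ_[p]ˣ) {j j' : ℕ} (hjj' : j ≤ j') :
    ‖mazurMoment p c j' - mazurMoment p c j‖ ≤ ‖(p : ℚ_[p]) ^ (j + 1)‖ := by
  have hp3 : 3 ≤ p := by have := (Fact.out : p.Prime).two_le; omega
  set n := (p - 1) * p ^ j - 1
  set n' := (p - 1) * p ^ j' - 1
  have hn : j + 1 ≤ n := Nat.succ_le_sub_one_mul_pow_sub_one hp3 j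
  have hn' : j + 1 ≤ n' := (Nat.succ_le_sub_one_mul_pow_sub_one hp3 j').trans' (by omega)
  have h2 : 2 * (mazurMoment p c j' - mazurMoment p c j) =
      (riemannSumLimit c n - riemannSumLimit c n') + (p : ℚ_[p]) ^ n' * riemannSumLimit c n'
        + -((p : ℚ_[p]) ^ n * riemannSumLimit c n) := by
    rw [mul_sub, two_mul_mazurMoment, two_mul_mazurMoment]
    ring
  rw [← one_mul ‖mazurMoment p c j' - _‖, ← Padic.norm_two_eq_one hp, ← norm_mul, h2]
  refine (IsUltrametricDist.norm_add_le_max _ _).trans (max_le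
    ((IsUltrametricDist.norm_add_le_max _ _).trans (max_le ?_ ?_)) ?_)
  · rw [norm_sub_rev]
    exact norm_riemannSumLimit_sub_le c (Nat.pow_sub_one_mul_pow_sub_one_modEq Fact.out hp3 hjj')
  · exact Padic.norm_pow_mul_le hn' (norm_riemannSumLimit_le c n')
  · rw [norm_neg]
    exact Padic.norm_pow_mul_le hn (norm_riemannSumLimit_le c n)

end MazurMeasure

theorem mazurMoment_converges_general (p : ℕ) [Fact p.Prime] (hp : p ≠ 2) (c : ℤ_[p]ˣ) :
    (∀ j : ℕ, ‖mazurMoment p c j‖ ≤ 1) ∧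
    (∀ j j' : ℕ, j ≤ j' → ∃ y : ℤ_[p],
        mazurMoment p c j' - mazurMoment p c j = (p : ℚ_[p]) ^ (j + 1) * (y : ℚ_[p])) ∧
    (∃ L : ℤ_[p], Filter.Tendsto (mazurMoment p c) Filter.atTop (nhds (L : ℚ_[p]))) := by
  have hbound := MazurMeasure.norm_mazurMoment_le hp c
  have hcongr (j j' : ℕ) (hjj' : j ≤ j') := MazurMeasure.norm_mazurMoment_sub_le hp c hjj'
  refine ⟨hbound, fun j j' hjj' => Padic.exists_eq_pow_mul_of_norm_le (hcongr j j' hjj'), ?_⟩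
  have hcauchy : CauchySeq (mazurMoment p c) := by
    refine cauchySeq_of_le_geometric ‖(p : ℚ_[p])‖ ‖(p : ℚ_[p])‖ Padic.norm_p_lt_one fun j => ?_
    rw [dist_comm, dist_eq_norm, ← pow_succ', ← norm_pow]
    exact hcongr j (j + 1) j.le_succ
  obtain ⟨L, hL⟩ := cauchySeq_tendsto_of_complete hcauchy
  exact ⟨⟨L, le_of_tendsto' hL.norm hbound⟩, hL⟩

/-- for an odd prime `p` and `c ∈ ℤ_p^×` with `c ≠ ±1`, each `a_j` lies in
`ℤ_p`, for `j ≤ j'` one has `a_{j'} − a_j ∈ p^{j+1}·ℤ_p`, and consequently the sequence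
`(a_j)` converges in `ℤ_p`. -/
theorem mazurMoment_converges (p : ℕ) [Fact p.Prime] (hp : p ≠ 2) (c : ℤ_[p]ˣ)
    (hc1 : (c : ℤ_[p]) ≠ 1) (hc2 : (c : ℤ_[p]) ≠ -1) :
    (∀ j : ℕ, ‖mazurMoment p c j‖ ≤ 1) ∧
    (∀ j j' : ℕ, j ≤ j' → ∃ y : ℤ_[p],
        mazurMoment p c j' - mazurMoment p c j = (p : ℚ_[p]) ^ (j + 1) * (y : ℚ_[p])) ∧
    (∃ L : ℤ_[p], Filter.Tendsto (mazurMoment p c) Filter.atTop (nhds (L : ℚ_[p]))) :=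
  mazurMoment_converges_general p hp c
end
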